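/- arXiv:1501.03747 — 2 statements merged into one kernel-verified Lean document; each statement's English description precedes it below -/
import Mathlib

section
/- Let p = 1/2 - δ and ε = 2/3 - δ' with δ, δ' > 0 small enough that 2 - p - ε ≤ 1. Then, with χ(t) = -(-t)^p, so that χ''(t) = p(1-p)(-t)^{p-2}, the integral ∫_{B(0,1/2)∖{0}} (-log‖z‖)^{ε} · ‖z‖^{-4} χ''(log‖z‖) dV(z) over ℂ² diverges. -/
open MeasureTheory Set Metric Real

noncomputable instance (n : ℕ) : MeasureSpace (EuclideanSpace ℂ (Fin n)) :=
  ⟨Measure.map (MeasurableEquiv.toLp 2 (Fin n → ℂ)) volume⟩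

/-- With `p = 1/2 - δ`, `ε = 2/3 - δ'` and `2 - p - ε ≤ 1`, the integral
`∫_{B(0,1/2)∖{0}} (-log‖z‖)^ε ‖z‖⁻⁴ χ''(log‖z‖) dV` on `ℂ²` diverges,
where `χ(t) = -(-t)^p`, so `χ''(t) = p(1-p)(-t)^{p-2}`. -/
theorem stmt13 (δ δ' : ℝ) (hδ : 0 < δ) (hδ' : 0 < δ')
    (p ε : ℝ) (hpdef : p = 1 / 2 - δ) (hεdef : ε = 2 / 3 - δ')
    (hsum : 2 - p - ε ≤ 1) :
    ∫⁻ z in (ball (0 : EuclideanSpace ℂ (Fin 2)) (1 / 2) \ {0}),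
        ENNReal.ofReal ((-Real.log ‖z‖) ^ ε * ‖z‖ ^ (-(4 : ℝ)) *
          (p * (1 - p) * (-Real.log ‖z‖) ^ (p - 2))) = ⊤ := by
  classical
  set E := EuclideanSpace ℂ (Fin 2)
  haveI : (volume : Measure E).IsAddHaarMeasure :=
    (PiLp.continuousLinearEquiv 2 ℝ (fun _ : Fin 2 => ℂ)).symm.isAddHaarMeasure_map volume
  haveI : BorelSpace E := inferInstance
  -- numerical facts
  have hp0 : 0 < p := by rw [hpdef]; rw [hpdef, hεdef] at hsum; linarith
  have hp1 : p < 1 := by rw [hpdef]; linarith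
  have hε0 : 0 < ε := by rw [hεdef]; rw [hpdef, hεdef] at hsum; linarith
  have hpe : (-1 : ℝ) ≤ ε + (p - 2) := by linarith
  set L := Real.log 2 with hLdef
  have hL : (1 : ℝ) / 2 < L := by
    have := Real.log_two_gt_d9; rw [hLdef]; linarith
  have hL0 : 0 < L := by linarith
  -- radii and annuli
  set r : ℕ → ℝ := fun k => (1 / 2 : ℝ) ^ (k + 2) with hrdef
  have hr_pos : ∀ k, 0 < r k := fun k => pow_pos (by norm_num) _
  have hr_anti : ∀ i j : ℕ, i ≤ j → r j ≤ r i := fun i j hij =>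
    pow_le_pow_of_le_one (by norm_num) (by norm_num) (by omega)
  have hr_lt : ∀ k, r (k + 1) < r k := fun k =>
    pow_lt_pow_right_of_lt_one₀ (by norm_num) (by norm_num) (by omega)
  have hlogr : ∀ j : ℕ, Real.log (r j) = -(((j : ℝ) + 2) * L) := by
    intro j
    rw [hrdef]
    simp only [Real.log_pow, one_div, Real.log_inv]
    push_cast; ring
  set f : E → ENNReal := fun z =>
    ENNReal.ofReal ((-Real.log ‖z‖) ^ ε * ‖z‖ ^ (-(4 : ℝ)) *
      (p * (1 - p) * (-Real.log ‖z‖) ^ (p - 2))) with hfdef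
  have hf : Measurable f := by
    rw [hfdef]
    have hlog : Measurable fun z : E => -Real.log ‖z‖ :=
      (Real.measurable_log.comp measurable_norm).neg
    exact (((hlog.pow measurable_const).mul
      (measurable_norm.pow measurable_const)).mul
      (measurable_const.mul (hlog.pow measurable_const))).ennreal_ofReal
  set A : ℕ → Set E := fun k => ball (0 : E) (r k) \ ball 0 (r (k + 1)) with hAdef
  have hmeasA : ∀ k, MeasurableSet (A k) := fun k =>
    measurableSet_ball.diff measurableSet_ball
  have hdisj' : ∀ i j : ℕ, i < j → Disjoint (A i) (A j) := by
    intro i j hij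
    refine Set.disjoint_left.2 fun z hzi hzj => hzi.2 ?_
    exact ball_subset_ball (hr_anti (i + 1) j (by omega)) hzj.1
  have hdisj : Pairwise (Function.onFun Disjoint A) := fun i j hij =>
    hij.lt_or_gt.elim (fun h => hdisj' i j h) fun h => (hdisj' j i h).symm
  -- measures of balls
  set c0 : ENNReal := volume (ball (0 : E) 1) with hc0def
  have hc0pos : 0 < c0 := measure_ball_pos _ _ one_pos
  have hfr : Module.finrank ℝ E = 4 := by
    have h4 : Module.finrank ℝ (Fin 2 → ℂ) = 4 := by
      simp [Module.finrank_pi_fintype, Complex.finrank_real_complex]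
    exact (WithLp.linearEquiv 2 ℝ (Fin 2 → ℂ)).finrank_eq.trans h4
  have hball : ∀ s : ℝ, 0 ≤ s →
      volume (ball (0 : E) s) = ENNReal.ofReal (s ^ 4) * c0 := by
    intro s hs
    rw [Measure.addHaar_ball volume (0 : E) hs, hfr, hc0def]
  have hrk4 : ∀ k, r (k + 1) ^ 4 = r k ^ 4 * (1 / 16) := by
    intro k
    have : r (k + 1) = r k * (1 / 2) := by rw [hrdef]; ring
    rw [this]; ring
  have hμA : ∀ k, volume (A k) = ENNReal.ofReal (15 / 16 * r k ^ 4) * c0 := by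
    intro k
    have hsub : ball (0 : E) (r (k + 1)) ⊆ ball 0 (r k) :=
      ball_subset_ball (hr_lt k).le
    have hdiff : volume (A k) =
        volume (ball (0 : E) (r k)) - volume (ball (0 : E) (r (k + 1))) :=
      measure_diff hsub measurableSet_ball.nullMeasurableSet measure_ball_lt_top.ne
    rw [hdiff, hball _ (hr_pos k).le, hball _ (hr_pos (k + 1)).le]
    have hsplit : ENNReal.ofReal (r k ^ 4) =
        ENNReal.ofReal (15 / 16 * r k ^ 4) + ENNReal.ofReal (r (k + 1) ^ 4) := by
      rw [← ENNReal.ofReal_add (by positivity) (by positivity)]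
      congr 1
      rw [hrk4 k]; ring
    rw [hsplit, add_mul]
    refine ENNReal.add_sub_cancel_right ?_
    exact ENNReal.mul_ne_top ENNReal.ofReal_ne_top measure_ball_lt_top.ne
  -- constant
  set K : ℝ := 15 / 16 * (p * (1 - p)) * (2 : ℝ) ^ (p - 2) with hKdef
  have hK0 : 0 < K := by
    apply mul_pos
    · apply mul_pos (by norm_num) (mul_pos hp0 (by linarith))
    · exact Real.rpow_pos_of_pos (by norm_num) _
  set C : ℝ := K * L⁻¹ with hCdef
  have hC0 : 0 < C := mul_pos hK0 (inv_pos.2 hL0)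
  -- per-annulus lower bound
  have key : ∀ k : ℕ, ENNReal.ofReal (C / ((k : ℝ) + 2)) * c0 ≤ ∫⁻ z in A k, f z := by
    intro k
    set x : ℝ := ((k : ℝ) + 2) * L with hxdef
    have hx0 : 0 < x := by positivity
    have hk0 : (0 : ℝ) ≤ (k : ℝ) := Nat.cast_nonneg k
    have hx1 : 1 ≤ x := by rw [hxdef]; nlinarith
    set ck : ℝ := x ^ ε * r k ^ (-(4 : ℝ)) *
      (p * (1 - p) * ((((k : ℝ) + 3) * L)) ^ (p - 2)) with hckdef
    have hck0 : 0 ≤ ck := by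
      apply mul_nonneg
      · apply mul_nonneg (Real.rpow_nonneg hx0.le _) (Real.rpow_nonneg (hr_pos k).le _)
      · exact mul_nonneg (mul_nonneg hp0.le (by linarith)) (Real.rpow_nonneg (by positivity) _)
    -- pointwise bound on the annulus
    have hpt : ∀ z ∈ A k, ENNReal.ofReal ck ≤ f z := by
      intro z hz
      have hz1 : ‖z‖ < r k := by
        have := hz.1; rwa [mem_ball_zero_iff] at this
      have hz2 : r (k + 1) ≤ ‖z‖ := by
        have := hz.2
        rw [mem_ball_zero_iff] at this
        linarith [not_lt.1 this]
      have hz0 : 0 < ‖z‖ := lt_of_lt_of_le (hr_pos (k + 1)) hz2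
      set t : ℝ := -Real.log ‖z‖ with htdef
      have ht_low : x ≤ t := by
        have h := Real.log_lt_log hz0 hz1
        rw [hlogr k] at h
        rw [htdef, hxdef]; linarith
      have ht_up : t ≤ ((k : ℝ) + 3) * L := by
        have h := Real.log_le_log (hr_pos (k + 1)) hz2
        rw [hlogr (k + 1)] at h
        rw [htdef]; push_cast at h ⊢; linarith
      have ht0 : 0 < t := lt_of_lt_of_le hx0 ht_low
      have h1 : x ^ ε ≤ t ^ ε := Real.rpow_le_rpow hx0.le ht_low hε0.le
      have h2 : r k ^ (-(4 : ℝ)) ≤ ‖z‖ ^ (-(4 : ℝ)) :=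
        Real.rpow_le_rpow_of_nonpos hz0 hz1.le (by norm_num)
      have h3 : (((k : ℝ) + 3) * L) ^ (p - 2) ≤ t ^ (p - 2) :=
        Real.rpow_le_rpow_of_nonpos ht0 ht_up (by linarith)
      rw [hfdef]
      apply ENNReal.ofReal_le_ofReal
      rw [hckdef, ← htdef]
      apply mul_le_mul
      · apply mul_le_mul h1 h2 (Real.rpow_nonneg (hr_pos k).le _)
          (Real.rpow_nonneg ht0.le _)
      · exact mul_le_mul_of_nonneg_left h3 (mul_nonneg hp0.le (by linarith))
      · exact mul_nonneg (mul_nonneg hp0.le (by linarith))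
          (Real.rpow_nonneg (by positivity) _)
      · exact mul_nonneg (Real.rpow_nonneg ht0.le _) (Real.rpow_nonneg hz0.le _)
    have step1 : ENNReal.ofReal ck * volume (A k) ≤ ∫⁻ z in A k, f z := by
      rw [← setLIntegral_const (A k) (ENNReal.ofReal ck)]
      exact setLIntegral_mono hf hpt
    refine le_trans ?_ step1
    rw [hμA k, ← mul_assoc, ← ENNReal.ofReal_mul hck0]
    apply mul_le_mul_left
    apply ENNReal.ofReal_le_ofReal
    -- real inequality : C / (k+2) ≤ ck * (15/16 * r k ^ 4)
    have hrkne : r k ^ (-(4 : ℝ)) * r k ^ 4 = 1 := by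
      have hc : r k ^ (4 : ℕ) = r k ^ ((4 : ℕ) : ℝ) := (Real.rpow_natCast _ _).symm
      rw [hc, ← Real.rpow_add (hr_pos k)]
      push_cast
      norm_num [Real.rpow_zero]
    have heq : ck * (15 / 16 * r k ^ 4) =
        15 / 16 * (p * (1 - p)) * (x ^ ε * (((k : ℝ) + 3) * L) ^ (p - 2)) := by
      rw [hckdef]
      have : x ^ ε * r k ^ (-(4 : ℝ)) *
          (p * (1 - p) * (((k : ℝ) + 3) * L) ^ (p - 2)) * (15 / 16 * r k ^ 4)
          = (r k ^ (-(4 : ℝ)) * r k ^ 4) *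
            (15 / 16 * (p * (1 - p)) * (x ^ ε * (((k : ℝ) + 3) * L) ^ (p - 2))) := by
        ring
      rw [this, hrkne, one_mul]
    rw [heq]
    have h5 : (2 * x) ^ (p - 2) ≤ (((k : ℝ) + 3) * L) ^ (p - 2) := by
      apply Real.rpow_le_rpow_of_nonpos (by positivity) ?_ (by linarith)
      rw [hxdef]; nlinarith
    have h6 : (2 * x) ^ (p - 2) = (2 : ℝ) ^ (p - 2) * x ^ (p - 2) :=
      Real.mul_rpow (by norm_num) hx0.le
    have h7 : x ^ (-1 : ℝ) ≤ x ^ (ε + (p - 2)) :=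
      Real.rpow_le_rpow_of_exponent_le hx1 hpe
    have h8 : x ^ ε * x ^ (p - 2) = x ^ (ε + (p - 2)) := (Real.rpow_add hx0 _ _).symm
    have h9 : x ^ (-1 : ℝ) = x⁻¹ := Real.rpow_neg_one x
    have hCx : C / ((k : ℝ) + 2) = K * x⁻¹ := by
      rw [hCdef, hxdef, mul_inv]
      ring
    rw [hCx]
    calc K * x⁻¹ ≤ K * x ^ (ε + (p - 2)) := by
          rw [← h9]; exact mul_le_mul_of_nonneg_left h7 hK0.le
      _ = 15 / 16 * (p * (1 - p)) * (x ^ ε * ((2:ℝ) ^ (p - 2) * x ^ (p - 2))) := by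
          rw [hKdef, ← h8]; ring
      _ ≤ 15 / 16 * (p * (1 - p)) * (x ^ ε * (((k : ℝ) + 3) * L) ^ (p - 2)) := by
          apply mul_le_mul_of_nonneg_left
          · apply mul_le_mul_of_nonneg_left _ (Real.rpow_nonneg hx0.le _)
            rw [← h6]; exact h5
          · exact mul_nonneg (by norm_num) (mul_nonneg hp0.le (by linarith))
  -- sum over annuli diverges
  have htsum : (∑' k : ℕ, ENNReal.ofReal (C / ((k : ℝ) + 2))) = ⊤ := by
    by_contra h
    have hsummable : Summable fun k : ℕ => Real.toNNReal (C / ((k : ℝ) + 2)) :=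
      ENNReal.tsum_coe_ne_top_iff_summable.1 h
    have h2 : Summable fun k : ℕ => C / ((k : ℝ) + 2) := by
      have := NNReal.summable_coe.2 hsummable
      refine this.congr fun k => ?_
      exact Real.coe_toNNReal _ (by positivity)
    have h3 : Summable fun k : ℕ => (((k : ℝ) + 2))⁻¹ := by
      have := h2.mul_left C⁻¹
      refine this.congr fun k => ?_
      field_simp
    have h4 : Summable fun k : ℕ => ((k : ℝ))⁻¹ := by
      rw [← summable_nat_add_iff 2]
      refine h3.congr fun k => ?_
      push_cast; ring_nf
    exact Real.not_summable_natCast_inv h4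
  have hUnion : (⋃ k, A k) ⊆ ball (0 : E) (1 / 2) \ {0} := by
    intro z hz
    obtain ⟨k, hzk⟩ := Set.mem_iUnion.1 hz
    have hz1 : ‖z‖ < r k := by
      have := hzk.1; rwa [mem_ball_zero_iff] at this
    have hz2 : r (k + 1) ≤ ‖z‖ := by
      have := hzk.2; rw [mem_ball_zero_iff] at this; linarith [not_lt.1 this]
    constructor
    · rw [mem_ball_zero_iff]
      calc ‖z‖ < r k := hz1
        _ ≤ r 0 := hr_anti 0 k (Nat.zero_le _)
        _ < 1 / 2 := by rw [hrdef]; norm_num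
    · simp only [Set.mem_singleton_iff]
      intro hz0
      rw [hz0, norm_zero] at hz2
      exact absurd hz2 (not_le.2 (hr_pos (k + 1)))
  have hchain : (⊤ : ENNReal) ≤ ∫⁻ z in (ball (0 : E) (1 / 2) \ {0}), f z := by
    calc (⊤ : ENNReal) = (∑' k : ℕ, ENNReal.ofReal (C / ((k : ℝ) + 2))) * c0 := by
          rw [htsum, ENNReal.top_mul hc0pos.ne']
      _ = ∑' k : ℕ, ENNReal.ofReal (C / ((k : ℝ) + 2)) * c0 :=
          ENNReal.tsum_mul_right.symm
      _ ≤ ∑' k : ℕ, ∫⁻ z in A k, f z := ENNReal.tsum_le_tsum key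
      _ = ∫⁻ z in ⋃ k, A k, f z := (lintegral_iUnion hmeasA hdisj f).symm
      _ ≤ ∫⁻ z in (ball (0 : E) (1 / 2) \ {0}), f z := lintegral_mono_set hUnion
  exact top_le_iff.1 hchain
end

section
/- Let H : (0,∞) → [0,∞) satisfy s·H(t+s) ≤ A^{1/n} H(t)^{1+ε} for all t > 0 and all s ∈ [0,1], where A > 0, ε > 0, n ≥ 1, and H is right-continuous, non-increasing with H(t) → 0 as t → ∞. Then there exists a finite T₀ (depending only on A, ε, n and H at some initial point) such that H(t) = 0 for all t ≥ T₀. -/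
/-!
Once `B H(u)^ε ≤ q` with `q^ε ≤ 1/2`, an induction shows that the bound `H ≤ H(u) q^j` propagates
along the points `u + 2 - 2·2^{-j}`, since the super-linear exponent pays for halving the step
at each stage. Jumping from the `(j+1)`-st point straight to `u + 2` (a step of `2^{-j}`) gives
`H(u + 2) ≤ H(u) q^{j+2}` for every `j`, hence `H(u + 2) = 0` when `q < 1`.
By `H(t) → 0`, such a `u` exists beyond some `t₀`, so `H` vanishes on `[t₀ + 2, ∞)`.
-/

open Set Filter Topology

namespace DeGiorgi

theorem inv_two_pow_mem_Ioc (j : ℕ) : (2⁻¹ : ℝ) ^ j ∈ Ioc 0 1 :=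
  ⟨by positivity, pow_le_one₀ (by norm_num) (by norm_num)⟩

variable {H : ℝ → ℝ} {B ε : ℝ}

theorem mul_mul_pow_rpow_le {c q : ℝ} (hc : 0 ≤ c) (hq : 0 ≤ q)
    (hqε : q ^ ε ≤ 2⁻¹) (hsmall : B * c ^ ε ≤ q) (j : ℕ) :
    B * (c * q ^ j) ^ ε ≤ q * 2⁻¹ ^ j := by
  calc B * (c * q ^ j) ^ ε = B * c ^ ε * (q ^ ε) ^ j := by
        rw [Real.mul_rpow hc (pow_nonneg hq j), ← Real.rpow_pow_comm hq, mul_assoc]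
    _ ≤ q * 2⁻¹ ^ j := by gcongr

section Iteration

variable (hB : 0 ≤ B) (hε : 0 ≤ ε) (hnonneg : ∀ t, 0 < t → 0 ≤ H t)
  (hiter : ∀ t, 0 < t → ∀ s ∈ Icc (0 : ℝ) 1, s * H (t + s) ≤ B * H t ^ (1 + ε))
include hB hε hnonneg hiter

theorem le_mul_of_step {t s M q : ℝ} (ht : 0 < t) (hs : s ∈ Ioc (0 : ℝ) 1) (hHM : H t ≤ M)
    (hM : B * M ^ ε ≤ q * s) : H (t + s) ≤ q * M := by
  have hH := hnonneg t ht
  have hM0 : 0 ≤ M := hH.trans hHM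
  refine le_of_mul_le_mul_left ?_ hs.1
  calc s * H (t + s) ≤ B * H t ^ (1 + ε) := hiter t ht s (Ioc_subset_Icc_self hs)
    _ ≤ B * M ^ (1 + ε) := by gcongr
    _ = B * M ^ ε * M := by rw [Real.rpow_one_add' hM0 (by positivity)]; ring
    _ ≤ q * s * M := by gcongr
    _ = s * (q * M) := by ring

variable {u q : ℝ} (hu : 0 < u) (hq : 0 ≤ q) (hqε : q ^ ε ≤ 2⁻¹) (hsmall : B * H u ^ ε ≤ q)
include hu hq hqε hsmall

theorem le_mul_pow_of_small (j : ℕ) : H (u + 2 - 2 * 2⁻¹ ^ j) ≤ H u * q ^ j := by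
  induction j with
  | zero => simp
  | succ j ih =>
    have hstep := inv_two_pow_mem_Ioc j
    have hpos : 0 < u + 2 - 2 * 2⁻¹ ^ j := by linarith [hstep.2]
    have := le_mul_of_step hB hε hnonneg hiter hpos hstep ih
      (mul_mul_pow_rpow_le (hnonneg u hu) hq hqε hsmall j)
    convert this using 1 <;> ring_nf

theorem eq_zero_add_two (hq1 : q < 1) : H (u + 2) = 0 := by
  have hbound (j : ℕ) : H (u + 2) ≤ H u * q ^ (j + 2) := by
    have hstep := inv_two_pow_mem_Ioc j
    have hpos : 0 < u + 2 - 2 * 2⁻¹ ^ (j + 1) := by linarith [(inv_two_pow_mem_Ioc (j + 1)).2]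
    have hM : B * (H u * q ^ (j + 1)) ^ ε ≤ q * 2⁻¹ ^ j :=
      (mul_mul_pow_rpow_le (hnonneg u hu) hq hqε hsmall (j + 1)).trans <|
        mul_le_mul_of_nonneg_left (pow_le_pow_of_le_one (by norm_num) (by norm_num) j.le_succ) hq
    have := le_mul_of_step hB hε hnonneg hiter hpos hstep
      (le_mul_pow_of_small hB hε hnonneg hiter hu hq hqε hsmall (j + 1)) hM
    convert this using 1 <;> ring_nf
  have hlim : Tendsto (fun j : ℕ ↦ H u * q ^ (j + 2)) atTop (𝓝 0) := by
    simpa using ((tendsto_pow_atTop_nhds_zero_of_lt_one hq hq1).comp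
      (tendsto_add_atTop_nat 2)).const_mul (H u)
  exact le_antisymm (ge_of_tendsto' hlim hbound) (hnonneg _ (by linarith))

end Iteration

end DeGiorgi

theorem stmt16_general (n : ℕ) (A ε : ℝ) (hA : 0 < A) (hε : 0 < ε)
    (H : ℝ → ℝ) (hnonneg : ∀ t, 0 < t → 0 ≤ H t)
    (hlim : Filter.Tendsto H Filter.atTop (nhds 0))
    (hiter : ∀ t, 0 < t → ∀ s ∈ Icc (0 : ℝ) 1,
      s * H (t + s) ≤ A ^ (1 / (n : ℝ)) * H t ^ (1 + ε)) :
    ∃ T₀ : ℝ, ∀ t, T₀ ≤ t → H t = 0 := by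
  set B := A ^ (1 / (n : ℝ))
  have hB : 0 ≤ B := Real.rpow_nonneg hA.le _
  set q : ℝ := 2⁻¹ ^ ε⁻¹
  have hq : 0 ≤ q := by positivity
  have hq1 : q < 1 := Real.rpow_lt_one (by norm_num) (by norm_num) (inv_pos.2 hε)
  have hqε : q ^ ε = 2⁻¹ := Real.rpow_inv_rpow (by norm_num) hε.ne'
  have hsmall : ∀ᶠ u in atTop, B * H u ^ ε < q := by
    have := (hlim.rpow_const (Or.inr hε.le)).const_mul B
    rw [Real.zero_rpow hε.ne', mul_zero] at this
    exact this.eventually_lt_const (by positivity)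
  obtain ⟨t₀, ht₀⟩ := eventually_atTop.1 (hsmall.and (eventually_gt_atTop 0))
  refine ⟨t₀ + 2, fun t ht ↦ ?_⟩
  obtain ⟨hsmall_u, hu⟩ := ht₀ (t - 2) (by linarith)
  simpa using DeGiorgi.eq_zero_add_two hB hε.le hnonneg hiter hu hq hqε.le hsmall_u.le hq1

/-- De Giorgi-type iteration lemma: if `H : (0,∞) → [0,∞)` is non-increasing,
right-continuous, tends to `0` at infinity and satisfies
`s·H(t+s) ≤ A^{1/n} H(t)^{1+ε}` for all `t > 0`, `s ∈ [0,1]`, then `H` vanishes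
beyond some finite threshold `T₀`. -/
theorem stmt16 (n : ℕ) (hn : 1 ≤ n) (A ε : ℝ) (hA : 0 < A) (hε : 0 < ε)
    (H : ℝ → ℝ) (hnonneg : ∀ t, 0 < t → 0 ≤ H t)
    (hmono : ∀ t₁ t₂, 0 < t₁ → t₁ ≤ t₂ → H t₂ ≤ H t₁)
    (hrc : ∀ t, 0 < t → ContinuousWithinAt H (Ici t) t)
    (hlim : Filter.Tendsto H Filter.atTop (nhds 0))
    (hiter : ∀ t, 0 < t → ∀ s ∈ Icc (0 : ℝ) 1,
      s * H (t + s) ≤ A ^ (1 / (n : ℝ)) * H t ^ (1 + ε)) :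
    ∃ T₀ : ℝ, ∀ t, T₀ ≤ t → H t = 0 :=
  stmt16_general n A ε hA hε H hnonneg hlim hiter
end
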